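/- Let G and H be finite groups and let H^op × G denote the object of ^H Fin_G with left H-action on the first coordinate and right G-action on the second coordinate (h(a,b)g = (ha, bg)). Every epimorphism f: H^op × G → O in the category ^H Fin_G is a K-torsor, where K = f^{-1}(f(1,1)) is a subgroup of the group H^op × G acting on H^op × G by left multiplication; in particular the fibers of f are exactly the right cosets of K. -/

import Mathlib

open CategoryTheory CategoryTheory.Limits MulOpposite

namespace Paper

/-- A functor preserves pullbacks, finite coproducts, and epimorphisms. -/
def PreservesPCE {C : Type*} {D : Type*} [Category C] [Category D] (F : C ⥤ D) : Prop :=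
  Nonempty (PreservesLimitsOfShape WalkingCospan F) ∧
  (∀ (J : Type) [Finite J], Nonempty (PreservesColimitsOfShape (Discrete J) F)) ∧
  F.PreservesEpimorphisms

/-- `Fun_pce C D`: the full subcategory of the functor category spanned by the functors
preserving pullbacks, finite coproducts and epimorphisms. -/
abbrev FunPCE (C : Type*) (D : Type*) [Category C] [Category D] :=
  ObjectProperty.FullSubcategory (fun F : C ⥤ D => PreservesPCE F)

/-- Finite sets with an action of the monoid `M`. -/
abbrev ActCat (M : Type) [Monoid M] := Action FintypeCat.{0} M

/-- `Fin_G`: finite right `G`-sets (encoded as left `Gᵐᵒᵖ`-actions). -/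
abbrev FinRight (G : Type) [Group G] := ActCat Gᵐᵒᵖ

/-- `^G Fin`: the category of finite *free* left `G`-sets. -/
abbrev FinFreeL (G : Type) [Group G] :=
  ObjectProperty.FullSubcategory (fun X : ActCat G => ∀ (g : G) (x : X.V), ConcreteCategory.hom (X.ρ g) x = x → g = 1)

/-- Finite `(G,H)`-bisets: a left `G`-action and a commuting right `H`-action. -/
abbrev BiAct (G H : Type) [Group G] [Group H] := ActCat (G × Hᵐᵒᵖ)

/-- The left `G`-action of a `(G,H)`-biset is free. -/
def LeftFree {G H : Type} [Group G] [Group H] (X : BiAct G H) : Prop :=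
  ∀ (g : G) (x : X.V), ConcreteCategory.hom (X.ρ (g, 1)) x = x → g = 1

/-- `^G Fin_H`: finite `(G,H)`-bisets whose left `G`-action is free. -/
abbrev BiFin (G H : Type) [Group G] [Group H] :=
  ObjectProperty.FullSubcategory (fun X : BiAct G H => LeftFree X)

/-- The separable `(G,H)`-biset `G × T` attached to a finite right `H`-set `T`,
with actions `g • (g', t) • h = (g * g', t • h)`. -/
noncomputable def sepBiset (G H : Type) [Group G] [Group H] [Fintype G]
    (T : ActCat Hᵐᵒᵖ) : BiAct G H where
  V := FintypeCat.of (G × T.V)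
  ρ :=
    { toFun := fun m => FintypeCat.homMk (fun p : G × T.V => (m.1 * p.1, ConcreteCategory.hom (T.ρ m.2) p.2))
      map_one' := by
        refine FintypeCat.hom_ext _ _ fun p => ?_
        show ((1 : G) * p.1, ConcreteCategory.hom (T.ρ 1) p.2) = p
        simp
      map_mul' := by
        intro a b
        refine FintypeCat.hom_ext _ _ fun p => ?_
        show ((a.1 * b.1) * p.1, ConcreteCategory.hom (T.ρ (a.2 * b.2)) p.2)
          = (a.1 * (b.1 * p.1), ConcreteCategory.hom (T.ρ a.2) (ConcreteCategory.hom (T.ρ b.2) p.2))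
        rw [mul_assoc, map_mul]
        rfl }

/-- A `(G,H)`-biset is separable if it is isomorphic to `G × T`
for some finite right `H`-set `T`. -/
def Separable (G H : Type) [Group G] [Group H] [Fintype G] (X : BiAct G H) : Prop :=
  ∃ T : ActCat Hᵐᵒᵖ, Nonempty (X ≅ sepBiset G H T)

/-- `(^G Fin_H)^sep`: the full subcategory of separable bisets. -/
abbrev SepCat (G H : Type) [Group G] [Group H] [Fintype G] :=
  ObjectProperty.FullSubcategory (fun X : BiFin G H => Separable G H X.obj)

variable {G H : Type} [Group G] [Group H]

/-- The relation generating `X ×_{(H,G)} Y`: `(x·g, y) ~ (x, g·y)` and `(h·x, y) ~ (x, y·h)`. -/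
def pairRel (X : BiAct H G) (Y : BiAct G H) : X.V × Y.V → X.V × Y.V → Prop :=
  fun p q =>
    (∃ g : G, p.1 = ConcreteCategory.hom (X.ρ (1, op g)) q.1 ∧ q.2 = ConcreteCategory.hom (Y.ρ (g, 1)) p.2) ∨
    (∃ h : H, q.1 = ConcreteCategory.hom (X.ρ (h, 1)) p.1 ∧ p.2 = ConcreteCategory.hom (Y.ρ (1, op h)) q.2)

/-- `X ×_{(H,G)} Y`: the quotient of `X × Y` by the equivalence relation generated by
`(x·g, y) ~ (x, g·y)` and `(h·x, y) ~ (x, y·h)`. -/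
def PairSet (X : BiAct H G) (Y : BiAct G H) : Type := Quot (pairRel X Y)

instance (X : BiAct H G) (Y : BiAct G H) : Finite (PairSet X Y) :=
  Quot.finite _

/-- `X ×_{(H,G)} Y` as an object of the category of finite sets. -/
noncomputable def pairObj (X : BiAct H G) (Y : BiAct G H) : FintypeCat :=
  letI := Fintype.ofFinite (PairSet X Y)
  FintypeCat.of (PairSet X Y)

/-- Functoriality of `X ×_{(H,G)} Y` in `X`. -/
noncomputable def pairMapFst {X X' : BiAct H G} (f : X ⟶ X') (Y : BiAct G H) :
    pairObj X Y ⟶ pairObj X' Y :=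
  FintypeCat.homMk <| Quot.map (fun p => (f.hom p.1, p.2)) (by
    rintro ⟨x, y⟩ ⟨x', y'⟩ (⟨g, h1, h2⟩ | ⟨h, h1, h2⟩)
    · left
      refine ⟨g, ?_, h2⟩
      have := ConcreteCategory.congr_hom (f.comm (1, op g)) x'
      simp only [FintypeCat.comp_apply] at this
      dsimp only at h1 ⊢
      rw [h1]; exact this
    · right
      refine ⟨h, ?_, h2⟩
      have := ConcreteCategory.congr_hom (f.comm (h, 1)) x
      simp only [FintypeCat.comp_apply] at this
      dsimp only at h1 ⊢
      rw [h1]; exact this)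

/-- Functoriality of `X ×_{(H,G)} Y` in `Y`. -/
noncomputable def pairMapSnd (X : BiAct H G) {Y Y' : BiAct G H} (f : Y ⟶ Y') :
    pairObj X Y ⟶ pairObj X Y' :=
  FintypeCat.homMk <| Quot.map (fun p => (p.1, f.hom p.2)) (by
    rintro ⟨x, y⟩ ⟨x', y'⟩ (⟨g, h1, h2⟩ | ⟨h, h1, h2⟩)
    · left
      refine ⟨g, h1, ?_⟩
      have := ConcreteCategory.congr_hom (f.comm (g, 1)) y
      simp only [FintypeCat.comp_apply] at this
      dsimp only at h2 ⊢
      rw [h2]; exact this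
    · right
      refine ⟨h, h1, ?_⟩
      have := ConcreteCategory.congr_hom (f.comm (1, op h)) y'
      simp only [FintypeCat.comp_apply] at this
      dsimp only at h2 ⊢
      rw [h2]; exact this)

/-- For a fixed biset `X`, the functor `X ×_{(H,G)} -` on all of `^G Fin_H`. -/
noncomputable def pairFstFunctorRaw (X : BiAct H G) : BiAct G H ⥤ FintypeCat where
  obj Y := pairObj X Y
  map f := pairMapSnd X f
  map_id Y := by
    refine FintypeCat.hom_ext _ _ fun q => ?_
    induction q using Quot.ind
    rfl
  map_comp f g := by
    refine FintypeCat.hom_ext _ _ fun q => ?_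
    induction q using Quot.ind
    rfl

/-- For a fixed biset `X` in `^H Fin_G`, the functor `X ×_{(H,G)} -` on `(^G Fin_H)^sep`. -/
noncomputable def pairFstFunctor (G H : Type) [Group G] [Group H] [Fintype G]
    (X : BiAct H G) : SepCat G H ⥤ FintypeCat :=
  ObjectProperty.ι _ ⋙ ObjectProperty.ι _ ⋙ pairFstFunctorRaw X

/-- For a fixed biset `Y` in `^G Fin_H`, the functor `- ×_{(H,G)} Y` on `^H Fin_G`. -/
noncomputable def pairSndFunctor (G H : Type) [Group G] [Group H]
    (Y : BiAct G H) : BiFin H G ⥤ FintypeCat where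
  obj X := pairObj X.obj Y
  map f := pairMapFst f.hom Y
  map_id X := by
    refine FintypeCat.hom_ext _ _ fun q => ?_
    induction q using Quot.ind
    rfl
  map_comp f g := by
    refine FintypeCat.hom_ext _ _ fun q => ?_
    induction q using Quot.ind
    rfl

variable (G H) [Fintype G] [Fintype H]

/-- The functor `(^G Fin_H)^sep ⟶ Fun_pce(^H Fin_G, Fin)` induced by the pairing. -/
noncomputable def pairingPhi
    (h : ∀ Y : SepCat G H, PreservesPCE (pairSndFunctor G H Y.obj.obj)) :
    SepCat G H ⥤ FunPCE (BiFin H G) FintypeCat where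
  obj Y := ⟨pairSndFunctor G H Y.obj.obj, h Y⟩
  map {Y Y'} f := ObjectProperty.homMk
    { app := fun X => pairMapSnd X.obj f.hom.hom
      naturality := by
        intro X X' g
        refine FintypeCat.hom_ext _ _ fun q => ?_
        induction q using Quot.ind
        rfl }
  map_id Y := by
    apply ObjectProperty.hom_ext
    apply NatTrans.ext
    funext X
    refine FintypeCat.hom_ext _ _ fun q => ?_
    induction q using Quot.ind
    rfl
  map_comp f g := by
    apply ObjectProperty.hom_ext
    apply NatTrans.ext
    funext X
    refine FintypeCat.hom_ext _ _ fun q => ?_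
    induction q using Quot.ind
    rfl

/-- The functor `^H Fin_G ⟶ Fun_pce((^G Fin_H)^sep, Fin)` induced by the pairing. -/
noncomputable def pairingPsi
    (h : ∀ X : BiFin H G, PreservesPCE (pairFstFunctor G H X.obj)) :
    BiFin H G ⥤ FunPCE (SepCat G H) FintypeCat where
  obj X := ⟨pairFstFunctor G H X.obj, h X⟩
  map {X X'} f := ObjectProperty.homMk
    { app := fun Y => pairMapFst f.hom Y.obj.obj
      naturality := by
        intro Y Y' g
        refine FintypeCat.hom_ext _ _ fun q => ?_
        induction q using Quot.ind
        rfl }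
  map_id X := by
    apply ObjectProperty.hom_ext
    apply NatTrans.ext
    funext Y
    refine FintypeCat.hom_ext _ _ fun q => ?_
    induction q using Quot.ind
    rfl
  map_comp f g := by
    apply ObjectProperty.hom_ext
    apply NatTrans.ext
    funext Y
    refine FintypeCat.hom_ext _ _ fun q => ?_
    induction q using Quot.ind
    rfl

end Paper

namespace Paper

open CategoryTheory CategoryTheory.Limits

/-- A `K`-torsor in a category `C`: an object `X` with a `K`-action `ρ`, together with a
`K`-invariant epimorphism `f : X ⟶ Y`, such that for any coproduct of copies of `X`
indexed by the elements of `K`, the square whose top map restricts to the identity on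
each copy, whose left map restricts on the copy indexed by `k` to the action of `k`,
and whose remaining two maps are `f`, is a pullback square. -/
def IsKTorsor {C : Type*} [Category C] (K : Type*) [Group K]
    {X Y : C} (ρ : K →* CategoryTheory.End X) (f : X ⟶ Y) : Prop :=
  Epi f ∧ (∀ k : K, ρ k ≫ f = f) ∧
  ∀ (c : Cofan (fun _ : K => X)) (hc : IsColimit c),
    IsPullback (hc.desc (Cofan.mk X (fun _ => 𝟙 X)))
      (hc.desc (Cofan.mk X (fun k => ρ k))) f f

end Paper

namespace Paper

variable (H G : Type) [Group H] [Group G] [Fintype H] [Fintype G]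

noncomputable instance mulOppositeFintype (α : Type*) [Fintype α] : Fintype αᵐᵒᵖ :=
  Fintype.ofEquiv α MulOpposite.opEquiv

/-- The biset `H^op × G` in `^H Fin_G`: left `H`-action on the first coordinate and
right `G`-action on the second coordinate, i.e. `h • (a, b) • g = (h·a, b·g)`.
Both actions are right multiplications in the group `Hᵐᵒᵖ × G`. -/
noncomputable def regBiset : BiAct H G where
  V := FintypeCat.of (Hᵐᵒᵖ × G)
  ρ :=
    { toFun := fun m => FintypeCat.homMk (fun (e : Hᵐᵒᵖ × G) => e * (op m.1, m.2.unop))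
      map_one' := by
        refine FintypeCat.hom_ext _ _ fun (e : Hᵐᵒᵖ × G) => ?_
        show e * (op (1 : H), ((1 : Gᵐᵒᵖ)).unop) = e
        simp
      map_mul' := by
        intro a b
        refine FintypeCat.hom_ext _ _ fun (e : Hᵐᵒᵖ × G) => ?_
        show e * (op (a.1 * b.1), (a.2 * b.2).unop)
          = (e * (op b.1, b.2.unop)) * (op a.1, a.2.unop)
        rw [mul_assoc]
        congr 1 }

/-- `H^op × G` as an object of `^H Fin_G`. -/
noncomputable def regBiFin : BiFin H G :=
  ⟨regBiset H G, by
    intro h e he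
    have he' : (show Hᵐᵒᵖ × G from e) * (op h, ((1 : Gᵐᵒᵖ)).unop) = e := he
    have : (op h, ((1 : Gᵐᵒᵖ)).unop) = (1 : Hᵐᵒᵖ × G) := mul_eq_left.mp he'
    have := congrArg Prod.fst this
    simpa using congrArg unop this⟩

variable {H G} (O : BiFin H G) (f : regBiFin H G ⟶ O)

/-- `K = f⁻¹(f(1,1))`, a subgroup of the group `H^op × G`. -/
noncomputable def torsorSubgroup : Subgroup (Hᵐᵒᵖ × G) where
  carrier := {e | f.hom.hom e = f.hom.hom ((1 : Hᵐᵒᵖ × G) : (regBiFin H G).obj.V)}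
  one_mem' := rfl
  mul_mem' := by
    intro a b ha hb
    have ha' : f.hom.hom a = f.hom.hom ((1 : Hᵐᵒᵖ × G) : (regBiFin H G).obj.V) := ha
    have hb' : f.hom.hom b = f.hom.hom ((1 : Hᵐᵒᵖ × G) : (regBiFin H G).obj.V) := hb
    have hc := fun e : (regBiFin H G).obj.V => ConcreteCategory.congr_hom (f.hom.comm (b.1.unop, op b.2)) e
    simp only [FintypeCat.comp_apply] at hc
    show f.hom.hom (a * b) = f.hom.hom ((1 : Hᵐᵒᵖ × G) : (regBiFin H G).obj.V)
    have e1 : f.hom.hom (a * b) = ConcreteCategory.hom (O.obj.ρ (b.1.unop, op b.2)) (f.hom.hom a) := hc a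
    have e2 : f.hom.hom ((1 : Hᵐᵒᵖ × G) * b) = ConcreteCategory.hom (O.obj.ρ (b.1.unop, op b.2))
        (f.hom.hom ((1 : Hᵐᵒᵖ × G) : (regBiFin H G).obj.V)) := hc (1 : Hᵐᵒᵖ × G)
    rw [one_mul] at e2
    rw [e1, ha', ← e2, hb']
  inv_mem' := by
    intro a ha
    have ha' : f.hom.hom a = f.hom.hom ((1 : Hᵐᵒᵖ × G) : (regBiFin H G).obj.V) := ha
    have hc := fun e : (regBiFin H G).obj.V => ConcreteCategory.congr_hom (f.hom.comm ((a⁻¹).1.unop, op (a⁻¹).2)) e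
    simp only [FintypeCat.comp_apply] at hc
    show f.hom.hom (((a⁻¹ : Hᵐᵒᵖ × G)) : (regBiFin H G).obj.V) = f.hom.hom ((1 : Hᵐᵒᵖ × G) : (regBiFin H G).obj.V)
    have e1 : f.hom.hom ((1 : Hᵐᵒᵖ × G) * a⁻¹) = ConcreteCategory.hom (O.obj.ρ ((a⁻¹).1.unop, op (a⁻¹).2))
        (f.hom.hom ((1 : Hᵐᵒᵖ × G) : (regBiFin H G).obj.V)) := hc (1 : Hᵐᵒᵖ × G)
    have e2 : f.hom.hom (a * a⁻¹) = ConcreteCategory.hom (O.obj.ρ ((a⁻¹).1.unop, op (a⁻¹).2)) (f.hom.hom a) := hc a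
    rw [one_mul] at e1
    rw [e1, ← ha', ← e2, mul_inv_cancel]
    exact ha'.symm

/-- Left multiplication by elements of `K` on `H^op × G`, as an action by
endomorphisms in `^H Fin_G`. -/
noncomputable def torsorRho : ↥(torsorSubgroup O f) →* CategoryTheory.End (regBiFin H G) where
  toFun k :=
    ObjectProperty.homMk
    { hom := FintypeCat.homMk (fun (e : Hᵐᵒᵖ × G) => (k : Hᵐᵒᵖ × G) * e)
      comm := by
        intro m
        refine FintypeCat.hom_ext _ _ fun (e : Hᵐᵒᵖ × G) => ?_
        exact (mul_assoc (k : Hᵐᵒᵖ × G) e _).symm }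
  map_one' := by
    apply ObjectProperty.hom_ext
    apply Action.hom_ext
    refine FintypeCat.hom_ext _ _ fun (e : Hᵐᵒᵖ × G) => ?_
    exact one_mul e
  map_mul' k k' := by
    apply ObjectProperty.hom_ext
    apply Action.hom_ext
    refine FintypeCat.hom_ext _ _ fun (e : Hᵐᵒᵖ × G) => ?_
    exact mul_assoc (k : Hᵐᵒᵖ × G) (k' : Hᵐᵒᵖ × G) e

end Paper

/-!
Equivariance of `f : Hᵐᵒᵖ × G ⟶ O` gives `f (e * a) = f 1 • a`, so `f e = f e'` exactly when
`e * e'⁻¹` lies in `K = f⁻¹(f 1)`: the fibres of `f` are the right cosets of `K`. Hence the pairs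
`(x, y)` with `f x = f y` are the pairs `(x, k * x)`, each for exactly one `k ∈ K`. This says that
`K × (Hᵐᵒᵖ × G)`, the coproduct of `K` copies of `Hᵐᵒᵖ × G`, is the fibre product of `f` with
itself, with projections `(k, x) ↦ x` and `(k, x) ↦ k * x`.
-/

lemma CategoryTheory.IsPullback.of_isColimit_cofan {C : Type*} [Category C] {ι : Type*}
    {F : ι → C} {c c' : Cofan F} (hc : IsColimit c) (hc' : IsColimit c') {X Y Z : C}
    {d : ∀ i, F i ⟶ X} {e : ∀ i, F i ⟶ Y} {f : X ⟶ Z} {g : Y ⟶ Z}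
    (h : IsPullback (hc'.desc (Cofan.mk X d)) (hc'.desc (Cofan.mk Y e)) f g) :
    IsPullback (hc.desc (Cofan.mk X d)) (hc.desc (Cofan.mk Y e)) f g :=
  h.of_iso (hc'.coconePointUniqueUpToIso hc) (Iso.refl _) (Iso.refl _) (Iso.refl _)
    (by simp) (by simp) (by simp) (by simp)

namespace Paper.BiFin

variable {H G : Type} [Group H] [Group G]

noncomputable def homMk {X Y : BiFin H G} (φ : X.obj.V → Y.obj.V)
    (hφ : ∀ m x, φ (ConcreteCategory.hom (X.obj.ρ m) x) = ConcreteCategory.hom (Y.obj.ρ m) (φ x)) :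
    X ⟶ Y :=
  ObjectProperty.homMk
    { hom := FintypeCat.homMk φ, comm := fun m => FintypeCat.hom_ext _ _ (hφ m) }

@[ext]
lemma hom_ext {X Y : BiFin H G} {φ ψ : X ⟶ Y} (h : ∀ x, φ.hom.hom x = ψ.hom.hom x) :
    φ = ψ :=
  ObjectProperty.hom_ext _ (Action.hom_ext _ _ (FintypeCat.hom_ext _ _ h))

lemma hom_comm_apply {X Y : BiFin H G} (φ : X ⟶ Y) (m : H × Gᵐᵒᵖ) (x : X.obj.V) :
    φ.hom.hom (ConcreteCategory.hom (X.obj.ρ m) x)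
      = ConcreteCategory.hom (Y.obj.ρ m) (φ.hom.hom x) :=
  ConcreteCategory.congr_hom (φ.hom.comm m) x

lemma congr_apply {X Y : BiFin H G} {φ ψ : X ⟶ Y} (h : φ = ψ) (x : X.obj.V) :
    φ.hom.hom x = ψ.hom.hom x := by rw [h]

variable (ι : Type) [Finite ι] (X : BiFin H G)

noncomputable def sigmaConst : BiFin H G :=
  letI := Fintype.ofFinite ι
  ⟨{ V := FintypeCat.of (ι × X.obj.V)
     ρ :=
       { toFun := fun m => FintypeCat.homMk fun p => (p.1, ConcreteCategory.hom (X.obj.ρ m) p.2)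
         map_one' := FintypeCat.hom_ext _ _ fun p =>
           show (p.1, ConcreteCategory.hom (X.obj.ρ 1) p.2) = p by simp
         map_mul' := fun a b => FintypeCat.hom_ext _ _ fun p =>
           show (p.1, ConcreteCategory.hom (X.obj.ρ (a * b)) p.2)
             = (p.1, ConcreteCategory.hom (X.obj.ρ a) (ConcreteCategory.hom (X.obj.ρ b) p.2)) by
           simp } },
   fun h p hp => X.property h p.2 (congrArg Prod.snd hp)⟩

noncomputable def sigmaConstCofan : Cofan fun _ : ι => X :=
  Cofan.mk (sigmaConst ι X) fun i => homMk (fun x => (i, x)) fun _ _ => rfl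

noncomputable def sigmaConstCofanIsColimit : IsColimit (sigmaConstCofan ι X) :=
  Cofan.IsColimit.mk _
    (fun c => homMk (fun p => (c.inj p.1).hom.hom p.2)
      fun m p => hom_comm_apply (c.inj p.1) m p.2)
    (fun _ _ => rfl)
    (fun _ _ hm => hom_ext fun p => congr_apply (hm p.1) p.2)

lemma isPullback_of_existsUnique {W X Y Z : BiFin H G} {p : W ⟶ X} {q : W ⟶ Y}
    {f : X ⟶ Z} {g : Y ⟶ Z} (w : p ≫ f = q ≫ g)
    (h : ∀ x y, f.hom.hom x = g.hom.hom y → ∃! u, p.hom.hom u = x ∧ q.hom.hom u = y) :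
    IsPullback p q f g := by
  choose lift hlift huniq using h
  refine IsPullback.of_isLimit' ⟨w⟩ (PullbackCone.IsLimit.mk _
    (fun s => homMk (fun z => lift _ _ (congr_apply s.condition z)) fun m z => ?_)
    (fun s => hom_ext fun z => (hlift _ _ _).1)
    (fun s => hom_ext fun z => (hlift _ _ _).2)
    (fun s u hp hq => hom_ext fun z =>
      huniq _ _ _ _ ⟨congr_apply hp z, congr_apply hq z⟩))
  refine (huniq _ _ _ _ ⟨?_, ?_⟩).symm
  · exact (hom_comm_apply p m _).trans
      ((congrArg _ (hlift _ _ _).1).trans (hom_comm_apply s.fst m z).symm)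
  · exact (hom_comm_apply q m _).trans
      ((congrArg _ (hlift _ _ _).2).trans (hom_comm_apply s.snd m z).symm)

end Paper.BiFin

namespace Paper

variable {H G : Type} [Group H] [Group G] [Fintype H] [Fintype G] (O : BiFin H G)
  (f : regBiFin H G ⟶ O)

lemma regBiFin_hom_apply_mul (e a : Hᵐᵒᵖ × G) :
    f.hom.hom ((e * a : Hᵐᵒᵖ × G) : (regBiFin H G).obj.V)
      = ConcreteCategory.hom (O.obj.ρ (a.1.unop, op a.2)) (f.hom.hom e) :=
  BiFin.hom_comm_apply f (a.1.unop, op a.2) e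

lemma regBiFin_hom_apply_eq_iff (e e' : Hᵐᵒᵖ × G) :
    f.hom.hom e = f.hom.hom e' ↔ ∃ k : torsorSubgroup O f, e = (k : Hᵐᵒᵖ × G) * e' := by
  constructor
  · intro h
    refine ⟨⟨e * e'⁻¹, ?_⟩, by group⟩
    calc f.hom.hom ((e * e'⁻¹ : Hᵐᵒᵖ × G) : (regBiFin H G).obj.V)
        = ConcreteCategory.hom (O.obj.ρ (e'⁻¹.1.unop, op e'⁻¹.2)) (f.hom.hom e') := by
          rw [regBiFin_hom_apply_mul, h]
      _ = f.hom.hom ((1 : Hᵐᵒᵖ × G) : (regBiFin H G).obj.V) := by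
          rw [← regBiFin_hom_apply_mul, mul_inv_cancel]
  · rintro ⟨k, rfl⟩
    calc f.hom.hom (((k : Hᵐᵒᵖ × G) * e' : Hᵐᵒᵖ × G) : (regBiFin H G).obj.V)
        = ConcreteCategory.hom (O.obj.ρ (e'.1.unop, op e'.2))
            (f.hom.hom ((1 : Hᵐᵒᵖ × G) : (regBiFin H G).obj.V)) := by
          rw [regBiFin_hom_apply_mul]; exact congrArg _ k.2
      _ = f.hom.hom e' := by rw [← regBiFin_hom_apply_mul, one_mul]

lemma torsorRho_comp (k : torsorSubgroup O f) : torsorRho O f k ≫ f = f :=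
  BiFin.hom_ext fun e => (regBiFin_hom_apply_eq_iff O f _ e).mpr ⟨k, rfl⟩

lemma isPullback_sigmaConst :
    IsPullback
      ((BiFin.sigmaConstCofanIsColimit (torsorSubgroup O f) (regBiFin H G)).desc
        (Cofan.mk _ fun _ => 𝟙 _))
      ((BiFin.sigmaConstCofanIsColimit (torsorSubgroup O f) (regBiFin H G)).desc
        (Cofan.mk _ fun k => torsorRho O f k)) f f := by
  refine BiFin.isPullback_of_existsUnique
    (BiFin.hom_ext fun p => ((regBiFin_hom_apply_eq_iff O f _ p.2).mpr ⟨p.1, rfl⟩).symm) ?_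
  intro x y hxy
  obtain ⟨k, hk⟩ := (regBiFin_hom_apply_eq_iff O f y x).mp hxy.symm
  refine ⟨(k, x), ⟨rfl, hk.symm⟩, ?_⟩
  rintro ⟨k', x'⟩ ⟨rfl, hk'⟩
  exact Prod.ext (Subtype.ext (mul_right_cancel (hk'.trans hk))) rfl

/-- **Statement 8** (Lemma `EpiTors`). Every epimorphism `f : H^op × G → O` in
`^H Fin_G` is a `K`-torsor, where `K = f⁻¹(f(1,1))` is a subgroup of the group
`H^op × G` acting on `H^op × G` by left multiplication; in particular the fibers of `f`
are exactly the right cosets of `K`. -/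
theorem epi_is_torsor (hf : Epi f) :
    IsKTorsor (↥(torsorSubgroup O f)) (torsorRho O f) f ∧
      ∀ e e' : Hᵐᵒᵖ × G, f.hom.hom e = f.hom.hom e' ↔
        ∃ k : torsorSubgroup O f, e = (k : Hᵐᵒᵖ × G) * e' :=
  ⟨⟨hf, torsorRho_comp O f, fun _ hc =>
      (isPullback_sigmaConst O f).of_isColimit_cofan hc _⟩,
    regBiFin_hom_apply_eq_iff O f⟩

end Paper
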